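/- Let F ∈ ℂ^{n×n} and 𝐯 ∈ ℂ^{n×p}, and suppose the (j+1)p columns of the matrix [𝐯, F𝐯, …, F^j𝐯] are linearly independent. Let s_1, …, s_j ∈ ℂ be outside the spectrum of F and let 𝔮 be a polynomial of degree j with roots s_1, …, s_j. Then there exist Z ∈ ℂ^{n×jp}, h ∈ ℂ^{p×jp}, and H ∈ ℂ^{jp×jp} such that: (i) [𝐯 Z] ∈ ℂ^{n×(j+1)p} has full column rank; (ii) F·Z = 𝐯·h + Z·H; (iii) with respect to the partition of H into p×p blocks, H is block upper triangular with i-th diagonal block equal to s_i·I_p; and (iv) the column span of Z equals the column span of 𝔮(F)^{-1}·[𝐯, F𝐯, …, F^{j−1}𝐯]. -/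

import Mathlib

/-!
Write `𝔮 = ∏ (X - s_i)` and `t_k = ∏_{i ≥ k} (X - s_i)`, so that `t_0 = 𝔮`, `t_j = 1` and
`(X - s_k) t_{k+1} = t_k`. The block columns `Z_k = 𝔮(F)⁻¹ t_{k+1}(F) V` then satisfy
`F Z_k = s_k Z_k + Z_{k-1}` (with `Z_{-1} = V`), a block bidiagonal rational Arnoldi relation.
Multiplying by the invertible `𝔮(F)` sends the columns of `[V Z]` to those of `t_k(F) V`,
`0 ≤ k ≤ j`. The monic `t_k` have degrees `j, …, 0`, so they span the polynomials of degree `≤ j`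
and these columns span the block Krylov space of order `j + 1`; as it has dimension `(j + 1) p`,
the `(j + 1) p` columns of `[V Z]` are independent. The same argument with `t_1, …, t_j` identifies
the span of `Z`.
-/

open Matrix Polynomial
open scoped Kronecker

theorem LinearIndependent.of_span_eq_of_card_eq {K M ι κ : Type*} [DivisionRing K]
    [AddCommGroup M] [Module K M] [Fintype ι] [Fintype κ] {f : ι → M} {g : κ → M}
    (hg : LinearIndependent K g)
    (hspan : Submodule.span K (Set.range f) = Submodule.span K (Set.range g))
    (hcard : Fintype.card ι = Fintype.card κ) : LinearIndependent K f := by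
  rw [linearIndependent_iff_card_eq_finrank_span] at hg ⊢
  rw [hcard, hg, Set.finrank, Set.finrank, hspan]

namespace Polynomial

variable {R : Type*} [CommRing R]

theorem span_range_eq_degreeLT_of_monic [Nontrivial R] {ι : Type*} {f : ι → R[X]} {N : ℕ}
    (hmonic : ∀ i, (f i).Monic) (hlt : ∀ i, (f i).natDegree < N)
    (hdeg : ∀ d < N, ∃ i, (f i).natDegree = d) :
    Submodule.span R (Set.range f) = degreeLT R N := by
  classical
  choose g hg using hdeg
  let S : Sequence R :=
    { elems' := fun d => if hd : d < N then f (g d hd) else X ^ d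
      degree_eq' := fun d => by
        split_ifs with hd
        · rw [degree_eq_natDegree (hmonic _).ne_zero, hg d hd]
        · exact degree_X_pow d }
  refine le_antisymm ?_ ?_
  · rw [Submodule.span_le]
    rintro _ ⟨i, rfl⟩
    exact mem_degreeLT.mpr (degree_le_natDegree.trans_lt (by exact_mod_cast hlt i))
  · rw [← S.span_degreeLT fun d hd => ?_]
    · refine Submodule.span_mono ?_
      rintro _ ⟨d, hd, rfl⟩
      exact ⟨g d hd, by simp [S, show d < N from hd]⟩
    · simp [S, hd, hmonic]

theorem span_X_pow_eq_degreeLT [Nontrivial R] (N : ℕ) :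
    Submodule.span R (Set.range fun k : Fin N => (X : R[X]) ^ (k : ℕ)) = degreeLT R N :=
  span_range_eq_degreeLT_of_monic (fun _ => monic_X_pow _) (by simp)
    fun d hd => ⟨⟨d, hd⟩, natDegree_X_pow d⟩

theorem isUnit_aeval_prod_X_sub_C {A ι : Type*} [Ring A] [Algebra R A] (a : A) (s : Finset ι)
    (σ : ι → R) (hσ : ∀ i ∈ s, σ i ∉ spectrum R a) :
    IsUnit (aeval a (∏ i ∈ s, (X - C (σ i)))) :=
  Finset.prod_induction _ (fun p => IsUnit (aeval a p))
    (fun p q hp hq => by rw [map_mul]; exact hp.mul hq) (by simp) fun i hi => by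
      simpa using (spectrum.notMem_iff.mp (hσ i hi)).neg

noncomputable def tailProd (σ : ℕ → R) (j k : ℕ) : R[X] :=
  ∏ i ∈ Finset.Ico k j, (X - C (σ i))

variable (σ : ℕ → R) (j : ℕ)

theorem monic_tailProd (k : ℕ) : (tailProd σ j k).Monic :=
  monic_prod_of_monic _ _ fun i _ => monic_X_sub_C (σ i)

theorem natDegree_tailProd [Nontrivial R] (k : ℕ) : (tailProd σ j k).natDegree = j - k := by
  rw [tailProd, natDegree_prod_of_monic _ _ fun i _ => monic_X_sub_C (σ i)]
  simp

theorem X_sub_C_mul_tailProd_succ {k : ℕ} (hk : k < j) :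
    (X - C (σ k)) * tailProd σ j (k + 1) = tailProd σ j k :=
  (Finset.prod_eq_prod_Ico_succ_bot hk _).symm

theorem span_tailProd_add [Nontrivial R] {a N : ℕ} (h : a + N = j + 1) :
    Submodule.span R (Set.range fun k : Fin N => tailProd σ j (k + a)) = degreeLT R N :=
  span_range_eq_degreeLT_of_monic (fun _ => monic_tailProd σ j _)
    (fun k => by rw [natDegree_tailProd]; omega)
    fun d hd => ⟨⟨N - 1 - d, by omega⟩, by rw [natDegree_tailProd]; simp only; omega⟩

end Polynomial

section BlockColumns

variable {K : Type*} [Field K] {n m : Type*} [Fintype n] [DecidableEq n]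
  (F : Matrix n n K) (V : Matrix n m K)

theorem span_aeval_mul_cols_mono {ι κ : Type*} {f : ι → K[X]} {g : κ → K[X]}
    (h : Submodule.span K (Set.range f) ≤ Submodule.span K (Set.range g)) :
    Submodule.span K (Set.range fun ic : ι × m => (aeval F (f ic.1) * V)ᵀ ic.2) ≤
      Submodule.span K (Set.range fun kc : κ × m => (aeval F (g kc.1) * V)ᵀ kc.2) := by
  rw [Submodule.span_le]
  rintro _ ⟨⟨i, c⟩, rfl⟩
  let L : K[X] →ₗ[K] n → K :=
    { toFun := fun q => aeval F q *ᵥ Vᵀ c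
      map_add' := fun p q => by simp [add_mulVec]
      map_smul' := fun a q => by simp [smul_mulVec] }
  refine Submodule.span_le.mpr ?_
    (Submodule.apply_mem_span_image_of_mem_span L (h (Submodule.subset_span ⟨i, rfl⟩)))
  rintro _ ⟨_, ⟨k, rfl⟩, rfl⟩
  exact Submodule.subset_span ⟨(k, c), rfl⟩

theorem span_aeval_mul_cols_eq_krylov {ι : Type*} {f : ι → K[X]} {N : ℕ}
    (h : Submodule.span K (Set.range f) = degreeLT K N) :
    Submodule.span K (Set.range fun ic : ι × m => (aeval F (f ic.1) * V)ᵀ ic.2) =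
      Submodule.span K (Set.range fun kc : Fin N × m => (F ^ (kc.1 : ℕ) * V)ᵀ kc.2) := by
  rw [← span_X_pow_eq_degreeLT] at h
  have hle := span_aeval_mul_cols_mono F V h.le
  have hge := span_aeval_mul_cols_mono F V h.ge
  simp only [aeval_X_pow] at hle hge
  exact le_antisymm hle hge

end BlockColumns

section RationalKrylov

variable {K : Type*} [Field K] {n m : Type*} [Fintype n] [DecidableEq n]
  (F : Matrix n n K) (V : Matrix n m K) (σ : ℕ → K) (j : ℕ)

-- `𝔮(F)⁻¹ t_k(F) V = (∏_{i < k} (F - σ i))⁻¹ V`, the `k`-th block of `[V Z]`.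
noncomputable def ratKrylovBlock (k : ℕ) : Matrix n m K :=
  aeval F (tailProd σ j k) * ((aeval F (tailProd σ j 0))⁻¹ * V)

variable {F σ j}

theorem ratKrylovBlock_zero (hQ : IsUnit (aeval F (tailProd σ j 0))) :
    ratKrylovBlock F V σ j 0 = V := by
  rw [ratKrylovBlock, ← Matrix.mul_assoc,
    mul_nonsing_inv _ ((isUnit_iff_isUnit_det _).mp hQ), Matrix.one_mul]

theorem aeval_mul_ratKrylovBlock (hQ : IsUnit (aeval F (tailProd σ j 0))) (k : ℕ) :
    aeval F (tailProd σ j 0) * ratKrylovBlock F V σ j k = aeval F (tailProd σ j k) * V := by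
  rw [ratKrylovBlock, ← Matrix.mul_assoc,
    ((Commute.all (tailProd σ j 0) (tailProd σ j k)).map (aeval F)).eq, Matrix.mul_assoc,
    ← Matrix.mul_assoc _ _ V, mul_nonsing_inv _ ((isUnit_iff_isUnit_det _).mp hQ), Matrix.one_mul]

theorem mul_ratKrylovBlock_succ {k : ℕ} (hk : k < j) :
    F * ratKrylovBlock F V σ j (k + 1) =
      σ k • ratKrylovBlock F V σ j (k + 1) + ratKrylovBlock F V σ j k := by
  simp only [ratKrylovBlock]
  rw [← X_sub_C_mul_tailProd_succ σ j hk, map_mul, map_sub, aeval_X, aeval_C,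
    Algebra.algebraMap_eq_smul_one, sub_mul, Matrix.smul_mul, Matrix.one_mul, Matrix.sub_mul,
    Matrix.mul_assoc, Matrix.smul_mul, add_sub_cancel]

end RationalKrylov

section ArnoldiRelation

variable {K : Type*} [Field K] {n m : Type*} [Fintype n] [Fintype m] [DecidableEq m]

def succBlocks (Y : ℕ → Matrix n m K) (j : ℕ) : Matrix n (Fin j × m) K :=
  of fun r kc => Y (kc.1 + 1) r kc.2

variable (K m) in
def firstBlockIdentity (j : ℕ) : Matrix m (Fin j × m) K :=
  of fun a kc => if (kc.1 : ℕ) = 0 then (1 : Matrix m m K) a kc.2 else 0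

def bidiagonal {j : ℕ} (s : Fin j → K) : Matrix (Fin j) (Fin j) K :=
  of fun i k => if i = k then s i else if (i : ℕ) + 1 = k then 1 else 0

theorem sum_mul_bidiagonal {j : ℕ} (s : Fin j → K) (x : ℕ → K) (k : Fin j) :
    ∑ i : Fin j, x ((i : ℕ) + 1) * bidiagonal s i k =
      s k * x (k + 1) + if (k : ℕ) = 0 then 0 else x k := by
  have hsplit : ∀ i, bidiagonal s i k =
      (if i = k then s i else 0) + if (i : ℕ) + 1 = k then 1 else 0 := fun i => by
    by_cases hik : i = k <;> simp [bidiagonal, hik]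
  rw [Finset.sum_congr rfl fun i _ => by rw [hsplit, mul_add], Finset.sum_add_distrib]
  congr 1
  · simp [mul_comm]
  · rcases k with ⟨_ | k, hk⟩
    · simp
    · rw [Finset.sum_eq_single ⟨k, by omega⟩] <;> simp +contextual [Fin.ext_iff]

theorem mul_succBlocks_eq (F : Matrix n n K) (Y : ℕ → Matrix n m K) {j : ℕ} (s : Fin j → K)
    (hY : ∀ k : Fin j, F * Y (k + 1) = s k • Y (k + 1) + Y k) :
    F * succBlocks Y j =
      Y 0 * firstBlockIdentity K m j + succBlocks Y j * (bidiagonal s ⊗ₖ (1 : Matrix m m K)) := by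
  refine Matrix.ext fun r kb => ?_
  obtain ⟨k, b⟩ := kb
  have hF : (F * succBlocks Y j) r (k, b) = s k * Y (k + 1) r b + Y k r b := by
    simpa [mul_apply, succBlocks] using congrFun (congrFun (hY k) r) b
  have hV : (Y 0 * firstBlockIdentity K m j) r (k, b) =
      if (k : ℕ) = 0 then Y 0 r b else 0 := by
    split_ifs with hk <;> simp [mul_apply, firstBlockIdentity, one_apply, hk]
  have hZ : (succBlocks Y j * (bidiagonal s ⊗ₖ (1 : Matrix m m K))) r (k, b) =
      ∑ i : Fin j, Y ((i : ℕ) + 1) r b * bidiagonal s i k := by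
    simp [mul_apply, Fintype.sum_prod_type, one_apply, succBlocks]
  rw [Matrix.add_apply, hV, hZ, sum_mul_bidiagonal s (fun i => Y i r b), hF]
  split_ifs with hk <;> simp [hk, add_comm]

end ArnoldiRelation

section RationalKrylovSpan

variable {K : Type*} [Field K] {n m : Type*} [Fintype n] [DecidableEq n]
  {F : Matrix n n K} (V : Matrix n m K) {σ : ℕ → K} {j : ℕ}

theorem span_aeval_mul_ratKrylovBlock (hQ : IsUnit (aeval F (tailProd σ j 0))) {a N : ℕ}
    (h : a + N = j + 1) :
    Submodule.span K (Set.range fun kc : Fin N × m =>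
        (aeval F (tailProd σ j 0) * ratKrylovBlock F V σ j (kc.1 + a))ᵀ kc.2) =
      Submodule.span K (Set.range fun kc : Fin N × m => (F ^ (kc.1 : ℕ) * V)ᵀ kc.2) := by
  have hcols : (fun kc : Fin N × m =>
      (aeval F (tailProd σ j 0) * ratKrylovBlock F V σ j (kc.1 + a))ᵀ kc.2) =
      fun kc => (aeval F (tailProd σ j (kc.1 + a)) * V)ᵀ kc.2 :=
    funext fun kc => by rw [aeval_mul_ratKrylovBlock V hQ]
  rw [hcols]
  exact span_aeval_mul_cols_eq_krylov F V (f := fun k : Fin N => tailProd σ j (k + a))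
    (span_tailProd_add σ j h)

theorem linearIndependent_fromCols_succBlocks_ratKrylov [Fintype m] [DecidableEq m]
    (hQ : IsUnit (aeval F (tailProd σ j 0)))
    (hindep : LinearIndependent K fun kc : Fin (j + 1) × m => (F ^ (kc.1 : ℕ) * V)ᵀ kc.2) :
    LinearIndependent K fun c => (fromCols V (succBlocks (ratKrylovBlock F V σ j) j))ᵀ c := by
  let e : m ⊕ Fin j × m ≃ Fin (j + 1) × m :=
    optionProdEquiv.symm.trans (Equiv.prodCongr (finSuccEquiv j).symm (Equiv.refl m))
  have hcols : (fun c => (fromCols V (succBlocks (ratKrylovBlock F V σ j) j))ᵀ c) =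
      (fun kc : Fin (j + 1) × m => (ratKrylovBlock F V σ j kc.1)ᵀ kc.2) ∘ e := by
    funext c
    rcases c with c | ⟨k, c⟩
    · ext r
      simp [e, ratKrylovBlock_zero V hQ]
    · ext r
      simp [e, succBlocks]
  rw [hcols, linearIndependent_equiv]
  refine LinearIndependent.of_comp (aeval F (tailProd σ j 0)).mulVecLin
    (hindep.of_span_eq_of_card_eq ?_ rfl)
  exact span_aeval_mul_ratKrylovBlock V hQ (a := 0) (N := j + 1) (by omega)

theorem span_succBlocks_ratKrylov_eq_comap (hQ : IsUnit (aeval F (tailProd σ j 0))) :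
    Submodule.span K
        (Set.range fun kc : Fin j × m => (succBlocks (ratKrylovBlock F V σ j) j)ᵀ kc) =
      Submodule.comap (aeval F (tailProd σ j 0)).mulVecLin
        (Submodule.span K (Set.range fun kc : Fin j × m => (F ^ (kc.1 : ℕ) * V)ᵀ kc.2)) := by
  have hinj : Function.Injective (aeval F (tailProd σ j 0)).mulVecLin :=
    mulVec_injective_iff_isUnit.mpr hQ
  rw [← Submodule.comap_map_eq_of_injective hinj (Submodule.span K _), Submodule.map_span,
    ← Set.range_comp, ← span_aeval_mul_ratKrylovBlock V hQ (a := 1) (N := j) (by omega)]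
  rfl

end RationalKrylovSpan

/-- Existence of a block rational Arnoldi decomposition in special form:
`F·Z = V·h + Z·H` with `H` block upper triangular having diagonal blocks
`s_i·I_p`, `[V Z]` of full column rank, and the columns of `Z` spanning the
block rational Krylov space `𝔮(F)⁻¹·[V, FV, …, F^{j-1}V]`. -/
theorem stmt5 (n p j : ℕ)
    (F : Matrix (Fin n) (Fin n) ℂ) (V : Matrix (Fin n) (Fin p) ℂ)
    (hindep : LinearIndependent ℂ
      (fun kc : Fin (j + 1) × Fin p => ((F ^ (kc.1 : ℕ)) * V)ᵀ kc.2))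
    (s : Fin j → ℂ) (hs : ∀ i, s i ∉ spectrum ℂ F) :
    ∃ (Z : Matrix (Fin n) (Fin j × Fin p) ℂ)
      (h : Matrix (Fin p) (Fin j × Fin p) ℂ)
      (H : Matrix (Fin j × Fin p) (Fin j × Fin p) ℂ),
      LinearIndependent ℂ
        (fun c : Fin p ⊕ (Fin j × Fin p) => (fromCols V Z)ᵀ c) ∧
      F * Z = V * h + Z * H ∧
      (∀ (i k : Fin j) (a b : Fin p), k < i → H (i, a) (k, b) = 0) ∧
      (∀ (i : Fin j) (a b : Fin p),
        H (i, a) (i, b) = if a = b then s i else 0) ∧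
      Submodule.span ℂ (Set.range fun c : Fin j × Fin p => Zᵀ c) =
        Submodule.comap
          (Matrix.mulVecLin (aeval F (∏ i : Fin j, (X - Polynomial.C (s i)))))
          (Submodule.span ℂ
            (Set.range fun kc : Fin j × Fin p => ((F ^ (kc.1 : ℕ)) * V)ᵀ kc.2)) := by
  let σ : ℕ → ℂ := fun i => if hi : i < j then s ⟨i, hi⟩ else 0
  have hσ : ∀ i : Fin j, σ i = s i := fun i => dif_pos i.isLt
  have hq : ∏ i : Fin j, (X - C (s i)) = tailProd σ j 0 := by
    simp only [tailProd, ← hσ, Fin.prod_univ_eq_prod_range fun i => X - C (σ i),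
      Finset.range_eq_Ico]
  have hQ : IsUnit (aeval F (tailProd σ j 0)) :=
    hq ▸ isUnit_aeval_prod_X_sub_C F _ s fun i _ => hs i
  refine ⟨succBlocks (ratKrylovBlock F V σ j) j, firstBlockIdentity ℂ (Fin p) j,
    bidiagonal s ⊗ₖ 1, linearIndependent_fromCols_succBlocks_ratKrylov V hQ hindep, ?_, ?_, ?_, ?_⟩
  · have hArnoldi := mul_succBlocks_eq F (ratKrylovBlock F V σ j) s fun k => by
      rw [← hσ k]
      exact mul_ratKrylovBlock_succ V k.isLt
    rwa [ratKrylovBlock_zero V hQ] at hArnoldi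
  · intro i k a b hki
    have hik : (i : ℕ) + 1 ≠ k := by omega
    simp [bidiagonal, hki.ne', hik]
  · intro i a b
    simp [bidiagonal, one_apply]
  · rw [hq]
    exact span_succBlocks_ratKrylov_eq_comap V hQ
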